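/- Let n ≥ 5 be an odd integer, let k be a field of characteristic 2, and let G be the complement of the cycle graph C_n on {1,…,n}. Then J_G^{[2]} : J_G ⊆ m^{[2]}; in particular, by Fedder's criterion, R/J_G is not F-pure. -/

import Mathlib

open MvPolynomial

noncomputable section

namespace BEI

/-- The polynomial ring `k[x_1,…,x_n,y_1,…,y_n]`: variables `Sum.inl i` are the `x_i`,
variables `Sum.inr i` are the `y_i`. -/
abbrev Ring' (k : Type*) [CommRing k] (n : ℕ) : Type _ := MvPolynomial (Fin n ⊕ Fin n) k

variable {k : Type*} [CommRing k] {n : ℕ}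

/-- The variable `x_i`. -/
def xv (i : Fin n) : Ring' k n := X (Sum.inl i)

/-- The variable `y_i`. -/
def yv (i : Fin n) : Ring' k n := X (Sum.inr i)

/-- The binomial `f_{i,j} = x_i y_j - x_j y_i`. -/
def fb (i j : Fin n) : Ring' k n := xv i * yv j - xv j * yv i

/-- The binomial edge ideal `J_G` of a graph `G` on `{1,…,n}`. -/
def beIdeal (G : SimpleGraph (Fin n)) : Ideal (Ring' k n) :=
  Ideal.span {g | ∃ i j, G.Adj i j ∧ g = fb i j}

/-- The Frobenius power `I^{[p]}`, the ideal generated by the `p`-th powers of all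
elements of `I`. -/
def frobPow {A : Type*} [CommSemiring A] (I : Ideal A) (p : ℕ) : Ideal A :=
  Ideal.span ((· ^ p) '' (I : Set A))

/-- The graded maximal ideal `m = (x_1,…,x_n,y_1,…,y_n)`. -/
def maxIdeal (k : Type*) [CommRing k] (n : ℕ) : Ideal (Ring' k n) :=
  Ideal.span (Set.range (X : (Fin n ⊕ Fin n) → Ring' k n))

/-- The cycle graph `C_n` on `{0,…,n-1}`: the edges are the pairs `{i, i+1 mod n}`. -/
def cycleG (n : ℕ) : SimpleGraph (Fin n) :=
  SimpleGraph.fromRel (fun i j => ((i : ℕ) + 1) % n = (j : ℕ))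

/-!
In characteristic `2`, `J_G^{[2]}` is generated by the squares
`f_{ij}^2 = (x_i y_j)^2 + (x_j y_i)^2`. Hence, if `ρ` is a squarefree monomial and `𝒟` a set of
monomials closed under replacing a factor `x_i y_j` by `x_j y_i` for every edge `ij`, the functional
`u ↦ ∑_{m ∈ 𝒟} [ρ m^2] u` vanishes on `J_G^{[2]}`. The "stars" `x_u ∏_{w ∈ W, w ≠ u} y_w`, `u ∈ W`,
form such a set for every `W`, and so does a single star when `u` has no neighbour in `W`.

For `g ∈ J_G^{[2]} : J_G`, applying these functionals to the products `g f_{ab}` yields linear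
relations between the coefficient `F` of `x_1 y_1 ⋯ x_n y_n` in `g` and the coefficients `P(u,v)`
of `x_u^2 y_v^2 ∏_{i ≠ u,v} x_i y_i`. When `G` is the complement of `C_n` they give
`P(e,e+1) + P(e+1,e) = F` and `P(e,e-1) = P(e,e+1)` for all `e`; summing the first over the cycle,
`n F = 2 ∑_e P(e,e+1) = 0`, so `F = 0` as `n` is odd. Multiplying `g` by monomials, every
squarefree coefficient of `g` vanishes, which means `g ∈ m^{[2]}`.
-/

open Sum

theorem frobPow_span {A : Type*} [CommSemiring A] {p : ℕ} [ExpChar A p] (s : Set A) :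
    frobPow (Ideal.span s) p = Ideal.span ((· ^ p) '' s) :=
  Ideal.map_span (frobenius A p) s

section MvPolynomial

variable {σ R : Type*} [CommSemiring R]

theorem coeff_mul_monomial_of_eq {g : MvPolynomial σ R} {M μ e : σ →₀ ℕ} (h : M = μ + e) :
    coeff M (g * monomial e 1) = coeff μ g := by
  rw [h, coeff_mul_monomial, mul_one]

theorem coeff_mul_monomial_of_not_le {g : MvPolynomial σ R} {M e : σ →₀ ℕ} (h : ¬e ≤ M) :
    coeff M (g * monomial e 1) = 0 := by
  rw [coeff_mul_monomial', if_neg h]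

theorem mem_span_X_sq_of_coeff_eq_zero {g : MvPolynomial σ R}
    (hg : ∀ s : σ →₀ ℕ, (∀ v, s v ≤ 1) → coeff s g = 0) :
    g ∈ Ideal.span (Set.range fun v => (X v : MvPolynomial σ R) ^ 2) := by
  have hrange : Set.range (fun v => (X v : MvPolynomial σ R) ^ 2) =
      (fun s => monomial s 1) '' Set.range (Finsupp.single · 2) := by
    rw [← Set.range_comp]
    simp only [Function.comp_def, X_pow_eq_monomial]
  rw [hrange, mem_ideal_span_monomial_image]
  intro s hs
  by_contra! h
  exact mem_support_iff.mp hs (hg s fun v => by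
    by_contra! hv
    exact h _ ⟨v, rfl⟩ (Finsupp.single_le_iff.mpr hv))

variable [CharP R 2]

theorem sum_coeff_mul_monomial_add_monomial_eq_zero {T : Finset (σ →₀ ℕ)} {p q : σ →₀ ℕ}
    (hT : ∀ μ, μ + p ∈ T ↔ μ + q ∈ T) (r : MvPolynomial σ R) :
    ∑ M ∈ T, coeff M (r * (monomial p 1 + monomial q 1)) = 0 := by
  classical
  induction r using MvPolynomial.induction_on' with
  | monomial μ c =>
    simp only [mul_add, monomial_mul, mul_one, coeff_add, Finset.sum_add_distrib, coeff_monomial,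
      Finset.sum_ite_eq, hT]
    exact CharTwo.add_self_eq_zero _
  | add r s hr hs => simp only [add_mul, coeff_add, Finset.sum_add_distrib, hr, hs, add_zero]

theorem sum_coeff_eq_zero_of_mem_span {T : Finset (σ →₀ ℕ)} {B : Set (MvPolynomial σ R)}
    (hB : ∀ b ∈ B, ∃ p q, b = monomial p 1 + monomial q 1 ∧ ∀ μ, μ + p ∈ T ↔ μ + q ∈ T)
    {u : MvPolynomial σ R} (hu : u ∈ Ideal.span B) : ∑ M ∈ T, coeff M u = 0 := by
  suffices ∀ r, ∑ M ∈ T, coeff M (r * u) = 0 by simpa using this 1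
  induction hu using Submodule.span_induction with
  | mem b hb =>
    obtain ⟨p, q, rfl, hT⟩ := hB b hb
    exact sum_coeff_mul_monomial_add_monomial_eq_zero hT
  | zero => simp
  | add u v _ _ hu hv => simp [mul_add, Finset.sum_add_distrib, hu, hv]
  | smul a u _ hu => intro r; simpa [mul_assoc] using hu (r * a)

end MvPolynomial

section SwapClosed

variable {σ : Type*}

def SwapClosed (𝒟 : Finset (σ →₀ ℕ)) (e e' : σ →₀ ℕ) : Prop :=
  ∀ R, e + R ∈ 𝒟 → e' + R ∈ 𝒟

theorem add_two_nsmul_injective (ρ : σ →₀ ℕ) :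
    Function.Injective fun D : σ →₀ ℕ => ρ + 2 • D := by
  intro D D' h
  ext s
  have := DFunLike.congr_fun h s
  simp only [Finsupp.coe_add, Finsupp.coe_smul, Pi.add_apply, Pi.smul_apply, smul_eq_mul] at this
  omega

theorem add_two_nsmul_mem_image_of_swapClosed [DecidableEq σ] {ρ : σ →₀ ℕ}
    (hρ : ∀ s, ρ s ≤ 1) {𝒟 : Finset (σ →₀ ℕ)} {e e' : σ →₀ ℕ} (h : SwapClosed 𝒟 e e')
    {μ : σ →₀ ℕ} (hμ : μ + 2 • e ∈ 𝒟.image (ρ + 2 • ·)) :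
    μ + 2 • e' ∈ 𝒟.image (ρ + 2 • ·) := by
  obtain ⟨D, hD, hDμ⟩ := Finset.mem_image.mp hμ
  have hDμ' (s : σ) : ρ s + 2 * D s = μ s + 2 * e s := by simpa using DFunLike.congr_fun hDμ s
  -- `ρ` is squarefree, so `e^2 ∣ ρ D^2` forces `e ∣ D`
  have hle : e ≤ D := fun s => by have := hDμ' s; have := hρ s; omega
  obtain ⟨R, rfl⟩ := exists_add_of_le hle
  refine Finset.mem_image.mpr ⟨e' + R, h R hD, ?_⟩
  ext s
  have := hDμ' s
  simp only [Finsupp.coe_add, Finsupp.coe_smul, Pi.add_apply, Pi.smul_apply, smul_eq_mul] at this ⊢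
  omega

end SwapClosed

section Exponents

def ex (i : Fin n) : Fin n ⊕ Fin n →₀ ℕ := Finsupp.single (inl i) 1

def ey (j : Fin n) : Fin n ⊕ Fin n →₀ ℕ := Finsupp.single (inr j) 1

def xy (i j : Fin n) : Fin n ⊕ Fin n →₀ ℕ := ex i + ey j

variable (n) in
def full : Fin n ⊕ Fin n →₀ ℕ := Finsupp.equivFunOnFinite.symm 1

/-- For `u ≠ v`, the exponent of `x_u^2 y_v^2 ∏_{i ≠ u,v} x_i y_i`. -/
def twistExp (u v : Fin n) : Fin n ⊕ Fin n →₀ ℕ := full n - xy v u + xy u v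

def starExp (W : Finset (Fin n)) (u : Fin n) : Fin n ⊕ Fin n →₀ ℕ :=
  ex u + ∑ w ∈ W.erase u, ey w

@[simp] theorem full_apply (s : Fin n ⊕ Fin n) : full n s = 1 := rfl

theorem full_tsub_apply_le_one (D : Fin n ⊕ Fin n →₀ ℕ) (s : Fin n ⊕ Fin n) :
    (full n - D) s ≤ 1 := by
  simp

@[simp] theorem starExp_apply_inl (W : Finset (Fin n)) (u i : Fin n) :
    starExp W u (inl i) = if u = i then 1 else 0 := by
  simp [starExp, ex, ey, Finsupp.single_apply]

@[simp] theorem starExp_apply_inr (W : Finset (Fin n)) (u j : Fin n) :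
    starExp W u (inr j) = if j ∈ W.erase u then 1 else 0 := by
  simp [starExp, ex, ey, Finsupp.single_apply]

theorem starExp_injective (W : Finset (Fin n)) : Function.Injective (starExp W) := by
  intro u v h
  simpa using DFunLike.congr_fun h (inl v)

theorem xy_add_eq_starExp_iff {W : Finset (Fin n)} {i j u : Fin n} {R : Fin n ⊕ Fin n →₀ ℕ} :
    xy i j + R = starExp W u ↔
      i = u ∧ j ∈ W.erase u ∧ R = ∑ w ∈ (W.erase u).erase j, ey w := by
  constructor
  · intro h
    have hi := DFunLike.congr_fun h (inl i)
    have hj := DFunLike.congr_fun h (inr j)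
    simp only [xy, ex, ey, Finsupp.coe_add, Pi.add_apply, Finsupp.single_eq_same,
      starExp_apply_inl, starExp_apply_inr] at hi hj
    have hiu : i = u := by by_contra hne; simp [Ne.symm hne] at hi
    have hju : j ∈ W.erase u := by by_contra hne; simp [hne] at hj
    refine ⟨hiu, hju, ?_⟩
    rw [starExp, ← Finset.add_sum_erase _ _ hju, ← add_assoc, ← xy, hiu] at h
    exact add_left_cancel h
  · rintro ⟨rfl, hj, rfl⟩
    rw [starExp, ← Finset.add_sum_erase _ _ hj, xy, add_assoc]

theorem swapClosed_image_starExp (W : Finset (Fin n)) (i j : Fin n) :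
    SwapClosed (W.image (starExp W)) (xy i j) (xy j i) := by
  intro R hR
  obtain ⟨u, hu, huR⟩ := Finset.mem_image.mp hR
  obtain ⟨rfl, hj, rfl⟩ := xy_add_eq_starExp_iff.mp huR.symm
  refine Finset.mem_image.mpr ⟨j, Finset.mem_of_mem_erase hj, Eq.symm ?_⟩
  exact xy_add_eq_starExp_iff.mpr ⟨rfl, Finset.mem_erase.mpr ⟨(Finset.ne_of_mem_erase hj).symm, hu⟩,
    by rw [Finset.erase_right_comm]⟩

end Exponents

section Binomials

theorem xv_mul_yv (i j : Fin n) : (xv i * yv j : Ring' k n) = monomial (xy i j) 1 := by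
  rw [xv, yv, X, X, monomial_mul, mul_one, xy, ex, ey]

theorem fb_eq_monomial_sub_monomial (i j : Fin n) :
    (fb i j : Ring' k n) = monomial (xy i j) 1 - monomial (xy j i) 1 := by
  rw [fb, xv_mul_yv, xv_mul_yv]

variable [CharP k 2]

theorem fb_sq (i j : Fin n) :
    (fb i j : Ring' k n) ^ 2 = monomial (2 • xy i j) 1 + monomial (2 • xy j i) 1 := by
  rw [fb_eq_monomial_sub_monomial, CharTwo.sub_eq_add, CharTwo.add_sq, monomial_pow,
    monomial_pow, one_pow]

theorem coeff_mul_fb (g : Ring' k n) (a b : Fin n) (M : Fin n ⊕ Fin n →₀ ℕ) :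
    coeff M (g * fb a b) =
      coeff M (g * monomial (xy a b) 1) + coeff M (g * monomial (xy b a) 1) := by
  rw [fb_eq_monomial_sub_monomial, CharTwo.sub_eq_add, mul_add, coeff_add]

variable {G : SimpleGraph (Fin n)} {ρ : Fin n ⊕ Fin n →₀ ℕ} {u : Ring' k n}

theorem sum_coeff_eq_zero_of_mem_frobPow (hρ : ∀ s, ρ s ≤ 1)
    {𝒟 : Finset (Fin n ⊕ Fin n →₀ ℕ)} (h𝒟 : ∀ i j, G.Adj i j → SwapClosed 𝒟 (xy i j) (xy j i))
    (hu : u ∈ frobPow (beIdeal G) 2) : ∑ D ∈ 𝒟, coeff (ρ + 2 • D) u = 0 := by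
  rw [← Finset.sum_image (f := fun M => coeff M u)
    fun D _ D' _ h => add_two_nsmul_injective ρ h]
  rw [beIdeal, frobPow_span] at hu
  refine sum_coeff_eq_zero_of_mem_span ?_ hu
  rintro _ ⟨_, ⟨i, j, hij, rfl⟩, rfl⟩
  exact ⟨_, _, fb_sq i j, fun μ => ⟨add_two_nsmul_mem_image_of_swapClosed hρ (h𝒟 i j hij),
    add_two_nsmul_mem_image_of_swapClosed hρ (h𝒟 j i hij.symm)⟩⟩

theorem sum_coeff_starExp_eq_zero (hρ : ∀ s, ρ s ≤ 1) (W : Finset (Fin n))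
    (hu : u ∈ frobPow (beIdeal G) 2) : ∑ w ∈ W, coeff (ρ + 2 • starExp W w) u = 0 := by
  rw [← Finset.sum_image (f := fun D => coeff (ρ + 2 • D) u)
    fun v _ w _ h => starExp_injective W h]
  exact sum_coeff_eq_zero_of_mem_frobPow hρ (fun i j _ => swapClosed_image_starExp W i j) hu

theorem coeff_starExp_eq_zero (hρ : ∀ s, ρ s ≤ 1) {W : Finset (Fin n)} {e : Fin n}
    (hW : ∀ w ∈ W.erase e, ¬G.Adj e w) (hu : u ∈ frobPow (beIdeal G) 2) :
    coeff (ρ + 2 • starExp W e) u = 0 := by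
  have hclosed (i j : Fin n) (hij : G.Adj i j) :
      SwapClosed {starExp W e} (xy i j) (xy j i) := by
    intro R hR
    obtain ⟨rfl, hj, -⟩ := xy_add_eq_starExp_iff.mp (Finset.mem_singleton.mp hR)
    exact absurd hij (hW j hj)
  simpa using sum_coeff_eq_zero_of_mem_frobPow hρ hclosed hu

end Binomials

section Relations

variable [CharP k 2] {G : SimpleGraph (Fin n)} {g : Ring' k n}

theorem coeff_twistExp_pair_add_coeff_full_eq_zero {a b : Fin n} (hab : a ≠ b)
    (hg : g * fb a b ∈ frobPow (beIdeal G) 2) :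
    coeff (twistExp a b) g + coeff (twistExp b a) g + coeff (full n) g = 0 := by
  set ρ := full n - xy b a with hρ
  have h := sum_coeff_starExp_eq_zero (full_tsub_apply_le_one (xy b a)) {a, b} hg
  have hMa : ρ + 2 • starExp {a, b} a = twistExp a b + xy a b := by
    ext (i | i) <;> simp [hρ, twistExp, xy, ex, ey, Finsupp.single_apply] <;> split_ifs <;> omega
  have hMa' : ¬xy b a ≤ ρ + 2 • starExp {a, b} a := fun h => by
    simpa [hρ, xy, ex, ey, hab] using h (inr a)
  have hMb : ρ + 2 • starExp {a, b} b = twistExp b a + xy a b := by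
    ext (i | i) <;> simp [hρ, twistExp, xy, ex, ey, Finsupp.single_apply] <;> split_ifs <;> omega
  have hMb' : ρ + 2 • starExp {a, b} b = full n + xy b a := by
    ext (i | i) <;> simp [hρ, xy, ex, ey, Finsupp.single_apply] <;> split_ifs <;> omega
  rwa [Finset.sum_pair hab, coeff_mul_fb, coeff_mul_fb, coeff_mul_monomial_of_eq hMa,
    coeff_mul_monomial_of_not_le hMa', coeff_mul_monomial_of_eq hMb,
    coeff_mul_monomial_of_eq hMb', add_zero, ← add_assoc] at h

theorem coeff_twistExp_triangle_eq_zero {a b e : Fin n} (hab : a ≠ b) (hae : a ≠ e)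
    (hbe : b ≠ e) (hg : g * fb a b ∈ frobPow (beIdeal G) 2) :
    coeff (twistExp a e) g + coeff (twistExp b e) g +
      (coeff (twistExp e a) g + coeff (twistExp e b) g) = 0 := by
  set ρ := full n - (ex e + ey a + ey b + ey e) with hρ
  have h := sum_coeff_starExp_eq_zero (full_tsub_apply_le_one (ex e + ey a + ey b + ey e))
    {a, b, e} hg
  have hMa : ρ + 2 • starExp {a, b, e} a = twistExp a e + xy a b := by
    ext (i | i) <;> simp [hρ, twistExp, xy, ex, ey, Finsupp.single_apply] <;> split_ifs <;> omega
  have hMa' : ¬xy b a ≤ ρ + 2 • starExp {a, b, e} a := fun h => by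
    simpa [hρ, xy, ex, ey, hab, hae] using h (inr a)
  have hMb : ρ + 2 • starExp {a, b, e} b = twistExp b e + xy b a := by
    ext (i | i) <;> simp [hρ, twistExp, xy, ex, ey, Finsupp.single_apply] <;> split_ifs <;> omega
  have hMb' : ¬xy a b ≤ ρ + 2 • starExp {a, b, e} b := fun h => by
    simpa [hρ, xy, ex, ey, hab.symm, hbe] using h (inr b)
  have hMe : ρ + 2 • starExp {a, b, e} e = twistExp e a + xy a b := by
    ext (i | i) <;> simp [hρ, twistExp, xy, ex, ey, Finsupp.single_apply] <;> split_ifs <;> omega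
  have hMe' : ρ + 2 • starExp {a, b, e} e = twistExp e b + xy b a := by
    ext (i | i) <;> simp [hρ, twistExp, xy, ex, ey, Finsupp.single_apply] <;> split_ifs <;> omega
  rwa [Finset.sum_insert (by simp [hab, hae]), Finset.sum_pair hbe, coeff_mul_fb, coeff_mul_fb,
    coeff_mul_fb, coeff_mul_monomial_of_eq hMa, coeff_mul_monomial_of_not_le hMa',
    coeff_mul_monomial_of_not_le hMb', coeff_mul_monomial_of_eq hMb,
    coeff_mul_monomial_of_eq hMe, coeff_mul_monomial_of_eq hMe', add_zero, zero_add,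
    ← add_assoc] at h

theorem coeff_twistExp_add_coeff_twistExp_eq_zero_of_not_adj {a b e : Fin n} (hab : a ≠ b)
    (hea : e ≠ a) (heb : e ≠ b) (hna : ¬G.Adj e a) (hnb : ¬G.Adj e b)
    (hg : g * fb a b ∈ frobPow (beIdeal G) 2) :
    coeff (twistExp e a) g + coeff (twistExp e b) g = 0 := by
  set ρ := full n - (ex e + ey a + ey b + ey e) with hρ
  have hW : ∀ w ∈ ({a, b, e} : Finset (Fin n)).erase e, ¬G.Adj e w := by
    simp only [Finset.mem_erase, Finset.mem_insert, Finset.mem_singleton]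
    rintro w ⟨-, rfl | rfl | rfl⟩
    exacts [hna, hnb, G.irrefl]
  have h := coeff_starExp_eq_zero (full_tsub_apply_le_one (ex e + ey a + ey b + ey e)) hW hg
  have hMe : ρ + 2 • starExp {a, b, e} e = twistExp e a + xy a b := by
    ext (i | i) <;> simp [hρ, twistExp, xy, ex, ey, Finsupp.single_apply] <;> split_ifs <;> omega
  have hMe' : ρ + 2 • starExp {a, b, e} e = twistExp e b + xy b a := by
    ext (i | i) <;> simp [hρ, twistExp, xy, ex, ey, Finsupp.single_apply] <;> split_ifs <;> omega
  rwa [coeff_mul_fb, coeff_mul_monomial_of_eq hMe, coeff_mul_monomial_of_eq hMe'] at h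

end Relations

section Cycle

open Fin.CommRing

theorem compl_cycleG_adj_iff [NeZero n] (hn : 2 ≤ n) {i j : Fin n} :
    (cycleG n)ᶜ.Adj i j ↔ i ≠ j ∧ j ≠ i + 1 ∧ i ≠ j + 1 := by
  have hsucc {i j : Fin n} : ((i : ℕ) + 1) % n = j ↔ i + 1 = j := by
    rw [Fin.ext_iff, Fin.val_add, Fin.val_one', Nat.mod_eq_of_lt (a := 1) (by omega)]
  simp only [SimpleGraph.compl_adj, cycleG, SimpleGraph.fromRel_adj, hsucc]
  grind

theorem compl_cycleG_not_adj_add_one [NeZero n] (hn : 2 ≤ n) (e : Fin n) :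
    ¬(cycleG n)ᶜ.Adj e (e + 1) :=
  fun h => ((compl_cycleG_adj_iff hn).mp h).2.1 rfl

theorem compl_cycleG_adj_add_two [NeZero n] (hn : 5 ≤ n) (e : Fin n) :
    (cycleG n)ᶜ.Adj e (e + 2) := by
  have h1 : (1 : Fin n) ≠ 0 := by simp [Fin.ext_iff, Nat.mod_eq_of_lt (show 1 < n by omega)]
  have h2 : (2 : Fin n) ≠ 0 := by simp [Fin.ext_iff, Nat.mod_eq_of_lt (show 2 < n by omega)]
  have h3 : (3 : Fin n) ≠ 0 := by simp [Fin.ext_iff, Nat.mod_eq_of_lt (show 3 < n by omega)]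
  rw [compl_cycleG_adj_iff (by omega)]
  exact ⟨fun h => h2 (by linear_combination -h), fun h => h1 (by linear_combination h),
    fun h => h3 (by linear_combination -h)⟩

theorem compl_cycleG_adj_add_three [NeZero n] (hn : 5 ≤ n) (e : Fin n) :
    (cycleG n)ᶜ.Adj e (e + 3) := by
  have h2 : (2 : Fin n) ≠ 0 := by simp [Fin.ext_iff, Nat.mod_eq_of_lt (show 2 < n by omega)]
  have h3 : (3 : Fin n) ≠ 0 := by simp [Fin.ext_iff, Nat.mod_eq_of_lt (show 3 < n by omega)]
  have h4 : (4 : Fin n) ≠ 0 := by simp [Fin.ext_iff, Nat.mod_eq_of_lt (show 4 < n by omega)]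
  rw [compl_cycleG_adj_iff (by omega)]
  exact ⟨fun h => h3 (by linear_combination -h), fun h => h2 (by linear_combination h),
    fun h => h4 (by linear_combination -h)⟩

theorem eq_zero_of_compl_cycleG_relations {K : Type*} [CommRing K] [CharP K 2]
    (hn : 5 ≤ n) (hodd : Odd n) (P : Fin n → Fin n → K) (F : K)
    (h1 : ∀ a b, (cycleG n)ᶜ.Adj a b → P a b + P b a + F = 0)
    (h2 : ∀ a b e, (cycleG n)ᶜ.Adj a b → a ≠ e → b ≠ e →
      P a e + P b e + (P e a + P e b) = 0)
    (h3 : ∀ a b e, (cycleG n)ᶜ.Adj a b → e ≠ a → e ≠ b → ¬(cycleG n)ᶜ.Adj e a →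
      ¬(cycleG n)ᶜ.Adj e b → P e a + P e b = 0) :
    F = 0 := by
  have : NeZero n := ⟨by omega⟩
  have htwo : (2 : K) = 0 := CharTwo.two_eq_zero
  have hone : (1 : Fin n) ≠ 0 := by simp [Fin.ext_iff, Nat.mod_eq_of_lt (show 1 < n by omega)]
  have hD (e : Fin n) : P e (e + 1) + P (e + 1) e = F := by
    have hbw := compl_cycleG_adj_add_two hn (e + 1)
    rw [show e + 1 + 2 = e + 3 by ring] at hbw
    have hew := compl_cycleG_adj_add_three hn e
    have hne : e + 1 ≠ e := fun h => hone (by linear_combination h)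
    linear_combination h2 _ _ e hbw hne hew.ne.symm + h1 _ _ hew -
      (P (e + 3) e + P e (e + 3) + F) * htwo
  have hflip (e : Fin n) : P e (e - 1) = P e (e + 1) := by
    have hadj := compl_cycleG_adj_add_two hn (e - 1)
    rw [show e - 1 + 2 = e + 1 by ring] at hadj
    have hna : ¬(cycleG n)ᶜ.Adj e (e - 1) := fun h =>
      compl_cycleG_not_adj_add_one (by omega) (e - 1) (by simpa using h.symm)
    have := h3 _ _ e hadj (fun h => hone (by linear_combination h))
      (fun h => hone (by linear_combination -h)) hna (compl_cycleG_not_adj_add_one (by omega) e)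
    linear_combination this - P e (e + 1) * htwo
  have hshift : ∑ e, P (e + 1) e = ∑ e, P e (e - 1) :=
    Fintype.sum_equiv (Equiv.addRight 1) _ _ fun e => by simp
  have hcard : (n : K) = 1 := by rw [CharP.cast_eq_mod K 2, Nat.odd_iff.mp hodd, Nat.cast_one]
  calc F = ∑ e : Fin n, (P e (e + 1) + P (e + 1) e) := by simp [hD, hcard]
    _ = 2 * ∑ e, P e (e + 1) := by rw [Finset.sum_add_distrib, hshift]; simp only [hflip]; ring
    _ = 0 := by rw [htwo, zero_mul]

end Cycle

theorem coeff_full_eq_zero_of_mem_colon [CharP k 2] (hn : 5 ≤ n) (hodd : Odd n)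
    {g : Ring' k n} (hg : g ∈ Submodule.colon (frobPow (beIdeal (k := k) (cycleG n)ᶜ) 2)
      (beIdeal (k := k) (cycleG n)ᶜ)) :
    coeff (full n) g = 0 := by
  have hmem (a b : Fin n) (hab : (cycleG n)ᶜ.Adj a b) :
      g * fb a b ∈ frobPow (beIdeal (cycleG n)ᶜ) 2 :=
    Submodule.mem_colon.mp hg _ (Ideal.subset_span ⟨a, b, hab, rfl⟩)
  exact eq_zero_of_compl_cycleG_relations hn hodd (fun u v => coeff (twistExp u v) g) _
    (fun a b hab => coeff_twistExp_pair_add_coeff_full_eq_zero hab.ne (hmem a b hab))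
    (fun a b e hab hae hbe => coeff_twistExp_triangle_eq_zero hab.ne hae hbe (hmem a b hab))
    (fun a b e hab hea heb hna hnb =>
      coeff_twistExp_add_coeff_twistExp_eq_zero_of_not_adj hab.ne hea heb hna hnb (hmem a b hab))

/-- for odd `n ≥ 5` and `k` of characteristic `2`, with `G` the
complement of the cycle `C_n`, one has `J_G^{[2]} : J_G ⊆ m^{[2]}`; that is, `R/J_G` is
not F-pure (Fedder's criterion). -/
theorem odd_antihole_not_F_pure (n : ℕ) (hn : 5 ≤ n) (hodd : Odd n)
    (k : Type*) [Field k] [CharP k 2] :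
    Submodule.colon (frobPow (beIdeal (k := k) (cycleG n)ᶜ) 2)
        (beIdeal (k := k) (cycleG n)ᶜ)
      ≤ frobPow (maxIdeal k n) 2 := by
  intro g hg
  rw [maxIdeal, frobPow_span, ← Set.range_comp]
  refine mem_span_X_sq_of_coeff_eq_zero fun s hs => ?_
  have hs_le : s ≤ full n := hs
  have h := coeff_full_eq_zero_of_mem_colon hn hodd
    (Ideal.mul_mem_left _ (monomial (full n - s) 1) hg)
  rwa [coeff_monomial_mul', if_pos tsub_le_self, tsub_tsub_cancel_of_le hs_le, one_mul] at h

end BEI
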